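/- Let Γ be a finite directed graph and let L be a proper closed inverse subsemigroup of the graph inverse semigroup S(Γ). Then exactly one of the following holds: (1) L consists of a finite chain of idempotents; (2) L consists of an infinite chain of idempotents; (3) L = L_{p,d} = {(vp^r d, vp^s d) : r,s ≥ 0, v a suffix of p} ∪ {(q,q) : q a suffix of d} for some nonempty directed circuit p in Γ and some directed path d starting at the basepoint of p, where p and d share no nontrivial common prefix. -/

import Mathlib

/-- A (finite) directed graph: vertices, edges, and source/target maps. -/
structure DGraph where
  V : Type
  E : Type
  src : E → V
  tgt : E → V

namespace DGraph

/-- The vertex reached after traversing a list of edges from a vertex. -/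
def walkEnd (G : DGraph) : G.V → List G.E → G.V
  | v, [] => v
  | _, e :: l => walkEnd G (G.tgt e) l

/-- The list of edges forms a directed walk starting at the given vertex. -/
def IsWalk (G : DGraph) : G.V → List G.E → Prop
  | _, [] => True
  | v, e :: l => G.src e = v ∧ IsWalk G (G.tgt e) l

variable (G : DGraph)

@[simp] theorem walkEnd_nil (v : G.V) : G.walkEnd v [] = v := rfl
@[simp] theorem walkEnd_cons (v : G.V) (e : G.E) (l : List G.E) :
    G.walkEnd v (e :: l) = G.walkEnd (G.tgt e) l := rfl
@[simp] theorem isWalk_nil (v : G.V) : G.IsWalk v [] := trivial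
@[simp] theorem isWalk_cons (v : G.V) (e : G.E) (l : List G.E) :
    G.IsWalk v (e :: l) ↔ G.src e = v ∧ G.IsWalk (G.tgt e) l := Iff.rfl

theorem isWalk_append (v : G.V) (l1 l2 : List G.E) :
    G.IsWalk v (l1 ++ l2) ↔ G.IsWalk v l1 ∧ G.IsWalk (G.walkEnd v l1) l2 := by
  induction l1 generalizing v with
  | nil => simp [IsWalk, walkEnd]
  | cons e l ih => simp [IsWalk, walkEnd, ih, and_assoc]

/-- A directed path in `G`: an initial vertex together with a compatible
list of edges, traversed in order (empty paths are allowed). -/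
structure DPath (G : DGraph) where
  first : G.V
  edges : List G.E
  wf : G.IsWalk first edges

namespace DPath

variable {G}

/-- The terminal vertex of a directed path. -/
def last (p : G.DPath) : G.V := G.walkEnd p.first p.edges

/-- The list of vertices lying on a directed path. -/
def vertexList (p : G.DPath) : List G.V := p.first :: p.edges.map G.tgt

/-- `q` is a suffix (terminal segment) of `p`: `p = l ⬝ q` for some edge list `l`. -/
def IsSuffixOf (q p : G.DPath) : Prop :=
  ∃ l : List G.E, p.edges = l ++ q.edges ∧ q.first = G.walkEnd p.first l

end DPath

theorem isWalk_chopAppend {u v w : G.DPath} (hs : v.IsSuffixOf u) (hvw : v.first = w.first) :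
    G.IsWalk u.first (u.edges.take (u.edges.length - v.edges.length) ++ w.edges) := by
  obtain ⟨l, hl, hfst⟩ := hs
  rw [hl]
  have hlen : (l ++ v.edges).length - v.edges.length = l.length := by simp
  rw [hlen, List.take_left, G.isWalk_append]
  have hu := u.wf
  rw [hl, G.isWalk_append] at hu
  refine ⟨hu.1, ?_⟩
  rw [← hfst, hvw]
  exact w.wf

theorem isWalk_concat {p q : G.DPath} (h : q.first = p.last) :
    G.IsWalk p.first (p.edges ++ q.edges) := by
  rw [G.isWalk_append]
  refine ⟨p.wf, ?_⟩
  show G.IsWalk p.last q.edges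
  rw [← h]
  exact q.wf

/-- Concatenation of composable directed paths. -/
def concatPath (p q : G.DPath) (h : q.first = p.last) : G.DPath :=
  ⟨p.first, p.edges ++ q.edges, G.isWalk_concat h⟩

theorem isWalk_replicate (a : G.E) (h : G.tgt a = G.src a) (m : ℕ) :
    G.IsWalk (G.src a) (List.replicate m a) := by
  induction m with
  | zero => trivial
  | succ n ih => rw [List.replicate_succ, G.isWalk_cons]; exact ⟨rfl, by rw [h]; exact ih⟩

/-- The path traversing a loop `a` exactly `m` times. -/
def loopPow (a : G.E) (h : G.tgt a = G.src a) (m : ℕ) : G.DPath :=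
  ⟨G.src a, List.replicate m a, G.isWalk_replicate a h m⟩

/-- `p` is a nonempty directed circuit. -/
def IsCircuit (p : G.DPath) : Prop := p.edges ≠ [] ∧ p.last = p.first

/-- `p` and `d` share no nontrivial common prefix (initial segment). -/
def NoCommonPrefix (p d : G.DPath) : Prop :=
  ∀ l : List G.E, l ≠ [] → l <+: p.edges → ¬ l <+: d.edges

end DGraph

/-- The underlying set of the graph inverse semigroup `S(Γ)`: pairs of directed
paths with the same initial vertex, together with a zero element. -/
inductive GIS (G : DGraph) where
  | zero : GIS G
  | pair (a b : G.DPath) (h : a.first = b.first) : GIS G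

namespace GIS

open scoped Classical in
/-- The multiplication of the graph inverse semigroup:
`(t,u)(v,w) = (t,pw)` if `u = pv`, `(pt,w)` if `v = pu`, and `0` otherwise. -/
noncomputable def mul {G : DGraph} : GIS G → GIS G → GIS G
  | .zero, _ => .zero
  | .pair _ _ _, .zero => .zero
  | .pair t u h1, .pair v w h2 =>
    if hs : v.IsSuffixOf u then
      .pair t ⟨t.first, u.edges.take (u.edges.length - v.edges.length) ++ w.edges,
        by rw [h1]; exact G.isWalk_chopAppend hs h2⟩ rfl
    else if hs' : u.IsSuffixOf v then
      .pair ⟨v.first, v.edges.take (v.edges.length - u.edges.length) ++ t.edges,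
        G.isWalk_chopAppend hs' h1.symm⟩ w h2
    else .zero

noncomputable instance {G : DGraph} : Mul (GIS G) := ⟨GIS.mul⟩

/-- The inverse: `(v,w)⁻¹ = (w,v)` and `0⁻¹ = 0`. -/
def inv {G : DGraph} : GIS G → GIS G
  | .zero => .zero
  | .pair a b h => .pair b a h.symm

/-- The natural partial order: `x ≤ y` iff `x = e * y` for some idempotent `e`. -/
def le {G : DGraph} (x y : GIS G) : Prop := ∃ e : GIS G, e * e = e ∧ x = e * y

end GIS

/-- `L` is a closed inverse subsemigroup of `S(Γ)`: a nonempty subset closed under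
multiplication, inverses, and upward closed in the natural partial order. -/
def IsCISS (G : DGraph) (L : Set (GIS G)) : Prop :=
  L.Nonempty ∧ (∀ a ∈ L, ∀ b ∈ L, a * b ∈ L) ∧ (∀ a ∈ L, a.inv ∈ L) ∧
    (∀ a ∈ L, ∀ s : GIS G, GIS.le a s → s ∈ L)

/-- The closed inverse subsemigroup `↑{(u,u)}` of (finite) chain type:
all `(q,q)` with `q` a suffix of `u`. -/
def chainSet (G : DGraph) (u : G.DPath) : Set (GIS G) :=
  {x | ∃ q : G.DPath, q.IsSuffixOf u ∧ x = GIS.pair q q rfl}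

/-- The edge list of the `r`-th power of the path `p`. -/
def powEdges {G : DGraph} (p : G.DPath) (r : ℕ) : List G.E :=
  (List.replicate r p.edges).flatten

/-- The closed inverse subsemigroup of cycle type
`L_{p,d} = {(v p^r d, v p^s d) : r,s ≥ 0, v a suffix of p} ∪ {(q,q) : q a suffix of d}`. -/
def cycleSet (G : DGraph) (p d : G.DPath) : Set (GIS G) :=
  {x | (∃ (r s : ℕ) (v a b : G.DPath) (h : a.first = b.first),
          v.IsSuffixOf p ∧ x = GIS.pair a b h ∧
          a.first = v.first ∧ a.edges = v.edges ++ powEdges p r ++ d.edges ∧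
          b.first = v.first ∧ b.edges = v.edges ++ powEdges p s ++ d.edges) ∨
       (∃ q : G.DPath, q.IsSuffixOf d ∧ x = GIS.pair q q rfl)}

/-- `L` is a chain of idempotents: all elements are idempotent and any two are
comparable in the natural partial order. -/
def IsChainOfIdem (G : DGraph) (L : Set (GIS G)) : Prop :=
  (∀ x ∈ L, x * x = x) ∧ ∀ x ∈ L, ∀ y ∈ L, GIS.le x y ∨ GIS.le y x

/-- The set of right cosets `↑(Lt)` (for `t` with `t t⁻¹ ∈ L`) of a closed inverse
subsemigroup `L`. -/
def cosets (G : DGraph) (L : Set (GIS G)) : Set (Set (GIS G)) :=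
  {C | ∃ t : GIS G, t * t.inv ∈ L ∧ C = {s | ∃ x ∈ L, GIS.le (x * t) s}}

/-- `H` and `K` are conjugate: for some `s`, `s⁻¹Hs ⊆ K` and `sKs⁻¹ ⊆ H`. -/
def Conjugate (G : DGraph) (H K : Set (GIS G)) : Prop :=
  ∃ s : GIS G, (∀ h ∈ H, s.inv * h * s ∈ K) ∧ (∀ k ∈ K, s * k * s.inv ∈ H)

/-- The set of directed paths with initial vertex `v` whose first edge (if any)
is not an edge of `w`. -/
def Npaths (G : DGraph) (v : G.V) (w : G.DPath) : Set G.DPath :=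
  {t | t.first = v ∧ ∀ e, t.edges.head? = some e → e ∉ w.edges}

/-!
As `0 ∉ L`, for any `(a, b), (c, e) ∈ L` one of `b`, `c` is a suffix of the other, so the
paths `q` with `(q, q) ∈ L` form a chain of suffixes; if all elements are idempotent, `L` is
a chain. Otherwise let `d` be the shortest second component of a non-idempotent element. The
length differences `|a| - |b|` of the elements of `L` form a subgroup `nℤ` of `ℤ`, `n > 0`, and
composing with long elements `(M, d)` of `L` yields `(p d, d) ∈ L` with `|p| = n`; then `p` is a
circuit, sharing no first edge with `d` by the minimality of `d`. Every `q` with `(q, q) ∈ L`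
and `|q| ≥ |d|` is a suffix of some `p ^ R d`, hence equal to `v p ^ s d` with `v` a suffix of
`p` determined by `|q| - |d|` modulo `n`; as the gaps are multiples of `n`, both components of
an element of `L` share the same `v`, whence `L = L_{p,d}`.
-/

namespace DGraph

variable {G : DGraph}

theorem walkEnd_append (v : G.V) (l₁ l₂ : List G.E) :
    G.walkEnd v (l₁ ++ l₂) = G.walkEnd (G.walkEnd v l₁) l₂ := by
  induction l₁ generalizing v with
  | nil => rfl
  | cons e l ih => simp [ih]

namespace DPath

theorem ext {p q : G.DPath} (h₁ : p.first = q.first) (h₂ : p.edges = q.edges) : p = q := by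
  cases p; cases q; simp_all

theorem IsSuffixOf.refl (p : G.DPath) : p.IsSuffixOf p := ⟨[], rfl, rfl⟩

theorem IsSuffixOf.eq_of_length_le {q p : G.DPath} (h : q.IsSuffixOf p)
    (hlen : p.edges.length ≤ q.edges.length) : q = p := by
  obtain ⟨l, hl, hf⟩ := h
  obtain rfl : l = [] := by
    have := congrArg List.length hl
    simp only [List.length_append] at this
    exact List.eq_nil_of_length_eq_zero (by omega)
  exact ext hf hl.symm

theorem IsSuffixOf.eq_of_edges_eq_append {q p : G.DPath} (h : q.IsSuffixOf p)
    {l₁ l₂ : List G.E} (hp : p.edges = l₁ ++ l₂) (hlen : q.edges.length = l₂.length) :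
    q.edges = l₂ ∧ q.first = G.walkEnd p.first l₁ := by
  obtain ⟨l, hl, hf⟩ := h
  have hl₁ : l.length = l₁.length := by
    have h₁ := congrArg List.length hl
    have h₂ := congrArg List.length hp
    simp only [List.length_append] at h₁ h₂
    omega
  obtain ⟨rfl, hq⟩ := List.append_inj (hl.symm.trans hp) hl₁
  exact ⟨hq, hf⟩

end DPath

end DGraph

namespace GIS

variable {G : DGraph}

theorem pair_mul_pair_of_isSuffixOf {t u v w : G.DPath} (h₁ : t.first = u.first)
    (h₂ : v.first = w.first) (hs : v.IsSuffixOf u) :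
    pair t u h₁ * pair v w h₂ =
      pair t ⟨t.first, u.edges.take (u.edges.length - v.edges.length) ++ w.edges,
        by rw [h₁]; exact G.isWalk_chopAppend hs h₂⟩ rfl := by
  show GIS.mul _ _ = _
  simp only [GIS.mul]
  rw [dif_pos hs]

theorem pair_mul_pair_of_isSuffixOf' {t u v w : G.DPath} (h₁ : t.first = u.first)
    (h₂ : v.first = w.first) (hns : ¬ v.IsSuffixOf u) (hs : u.IsSuffixOf v) :
    pair t u h₁ * pair v w h₂ =
      pair ⟨v.first, v.edges.take (v.edges.length - u.edges.length) ++ t.edges,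
        G.isWalk_chopAppend hs h₁.symm⟩ w h₂ := by
  show GIS.mul _ _ = _
  simp only [GIS.mul]
  rw [dif_neg hns, dif_pos hs]

theorem pair_mul_pair_eq_zero {t u v w : G.DPath} (h₁ : t.first = u.first)
    (h₂ : v.first = w.first) (hns : ¬ v.IsSuffixOf u) (hns' : ¬ u.IsSuffixOf v) :
    pair t u h₁ * pair v w h₂ = zero := by
  show GIS.mul _ _ = _
  simp only [GIS.mul]
  rw [dif_neg hns, dif_neg hns']

theorem pair_mul_pair_same {t u w : G.DPath} (h₁ : t.first = u.first) (h₂ : u.first = w.first) :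
    pair t u h₁ * pair u w h₂ = pair t w (h₁.trans h₂) := by
  rw [pair_mul_pair_of_isSuffixOf h₁ h₂ (.refl u)]
  congr 1
  exact DGraph.DPath.ext (h₁.trans h₂) (by simp)

theorem eq_of_pair_mul_self {a b : G.DPath} (h : a.first = b.first)
    (hid : pair a b h * pair a b h = pair a b h) : a = b := by
  by_cases hs : a.IsSuffixOf b
  · rw [pair_mul_pair_of_isSuffixOf h h hs] at hid
    injection hid with _ hb
    have := congrArg (fun p : G.DPath => p.edges.length) hb
    simp only [List.length_append, List.length_take] at this
    exact hs.eq_of_length_le (by omega)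
  · by_cases hs' : b.IsSuffixOf a
    · rw [pair_mul_pair_of_isSuffixOf' h h hs hs'] at hid
      injection hid with ha _
      have := congrArg (fun p : G.DPath => p.edges.length) ha
      simp only [List.length_append, List.length_take] at this
      exact (hs'.eq_of_length_le (by omega)).symm
    · rw [pair_mul_pair_eq_zero h h hs hs'] at hid
      cases hid

theorem zero_le (s : GIS G) : GIS.le zero s := ⟨zero, rfl, rfl⟩

theorem le_pair_of_edges_eq_append {a b a' b' : G.DPath} (h : a.first = b.first)
    (h' : a'.first = b'.first) (l : List G.E) (ha : a.edges = l ++ a'.edges)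
    (hb : b.edges = l ++ b'.edges) (hfa : a'.first = G.walkEnd a.first l) :
    GIS.le (pair a b h) (pair a' b' h') := by
  refine ⟨pair a a rfl, pair_mul_pair_same rfl rfl, ?_⟩
  rw [pair_mul_pair_of_isSuffixOf rfl h' ⟨l, ha, hfa⟩]
  have htake : a.edges.take (a.edges.length - a'.edges.length) = l := by
    rw [ha, List.length_append, Nat.add_sub_cancel, List.take_left]
  congr 1
  exact DGraph.DPath.ext h.symm (by rw [hb]; exact congrArg (· ++ b'.edges) htake.symm)

end GIS

def lengthGaps {G : DGraph} (L : Set (GIS G)) : Set ℤ :=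
  {k | ∃ (a b : G.DPath) (h : a.first = b.first), GIS.pair a b h ∈ L ∧
    (a.edges.length : ℤ) - b.edges.length = k}

theorem exists_shortest_nonidempotent {G : DGraph} {L : Set (GIS G)}
    (hne : ∃ z ∈ L, z * z ≠ z) :
    ∃ (x d : G.DPath) (h : x.first = d.first), GIS.pair x d h ∈ L ∧ x ≠ d ∧
      ∀ (a b : G.DPath) (h : a.first = b.first), GIS.pair a b h ∈ L → a ≠ b →
        d.edges.length ≤ b.edges.length := by
  classical
  have hex : ∃ m : ℕ, ∃ (x y : G.DPath) (h : x.first = y.first),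
      GIS.pair x y h ∈ L ∧ x ≠ y ∧ y.edges.length = m := by
    obtain ⟨_ | ⟨x, y, h⟩, hz, hzz⟩ := hne
    · exact absurd rfl hzz
    · refine ⟨_, x, y, h, hz, ?_, rfl⟩
      rintro rfl
      exact hzz (GIS.pair_mul_pair_same h h)
  obtain ⟨x, d, h, hxd, hne, hd⟩ := Nat.find_spec hex
  exact ⟨x, d, h, hxd, hne, fun a b h hab hab' =>
    hd ▸ Nat.find_min' hex ⟨a, b, h, hab, hab', rfl⟩⟩

namespace IsCISS

open GIS

variable {G : DGraph} {L : Set (GIS G)} (hL : IsCISS G L)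
include hL

theorem eq_univ_of_zero_mem (hz : zero ∈ L) : L = Set.univ :=
  Set.eq_univ_of_forall fun s => hL.2.2.2 _ hz s (zero_le s)

theorem pair_swap_mem {a b : G.DPath} {h : a.first = b.first} (hab : pair a b h ∈ L) :
    pair b a h.symm ∈ L :=
  hL.2.2.1 _ hab

theorem pair_left_mem {a b : G.DPath} {h : a.first = b.first} (hab : pair a b h ∈ L) :
    pair a a rfl ∈ L := by
  simpa only [pair_mul_pair_same] using hL.2.1 _ hab _ (hL.pair_swap_mem hab)

theorem pair_right_mem {a b : G.DPath} {h : a.first = b.first} (hab : pair a b h ∈ L) :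
    pair b b rfl ∈ L :=
  hL.pair_left_mem (hL.pair_swap_mem hab)

theorem exists_pair_mem_append_right {t u v w : G.DPath} {h₁ : t.first = u.first}
    {h₂ : v.first = w.first} (htu : pair t u h₁ ∈ L) (hvw : pair v w h₂ ∈ L)
    {l : List G.E} (hu : u.edges = l ++ v.edges) (hv : v.first = G.walkEnd u.first l) :
    ∃ (y : G.DPath) (h : t.first = y.first), pair t y h ∈ L ∧ y.edges = l ++ w.edges := by
  have hm := hL.2.1 _ htu _ hvw
  rw [pair_mul_pair_of_isSuffixOf h₁ h₂ ⟨l, hu, hv⟩] at hm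
  exact ⟨_, _, hm, by simp [hu]⟩

theorem exists_pair_mem_append_left {t u v w : G.DPath} {h₁ : t.first = u.first}
    {h₂ : v.first = w.first} (htu : pair t u h₁ ∈ L) (hvw : pair v w h₂ ∈ L)
    {l : List G.E} (hv : v.edges = l ++ u.edges) (hu : u.first = G.walkEnd v.first l) :
    ∃ (x : G.DPath) (h : x.first = w.first), pair x w h ∈ L ∧ x.edges = l ++ t.edges := by
  obtain ⟨x, h, hwx, hx⟩ :=
    hL.exists_pair_mem_append_right (hL.pair_swap_mem hvw) (hL.pair_swap_mem htu) hv hu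
  exact ⟨x, h.symm, hL.pair_swap_mem hwx, hx⟩

theorem exists_pair_mem_of_edges_eq_cons {a b : G.DPath} {h : a.first = b.first}
    (hab : pair a b h ∈ L) {e : G.E} {la lb : List G.E} (ha : a.edges = e :: la)
    (hb : b.edges = e :: lb) :
    ∃ (a' b' : G.DPath) (h' : a'.first = b'.first), pair a' b' h' ∈ L ∧
      a'.edges = la ∧ b'.edges = lb := by
  have hwa := a.wf
  have hwb := b.wf
  rw [ha, G.isWalk_cons] at hwa
  rw [hb, G.isWalk_cons] at hwb
  let a' : G.DPath := ⟨G.tgt e, la, hwa.2⟩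
  let b' : G.DPath := ⟨G.tgt e, lb, hwb.2⟩
  have hle : GIS.le (pair a b h) (pair a' b' rfl) :=
    le_pair_of_edges_eq_append (a' := a') (b' := b') h rfl [e] ha hb rfl
  exact ⟨a', b', rfl, hL.2.2.2 _ hab _ hle, rfl, rfl⟩

theorem noCommonPrefix_of_shortest {p d t : G.DPath} {h : t.first = d.first}
    (htd : pair t d h ∈ L) (ht : t.edges = p.edges ++ d.edges)
    (hmin : ∀ (a b : G.DPath) (h : a.first = b.first), pair a b h ∈ L → a ≠ b →
      d.edges.length ≤ b.edges.length) :
    G.NoCommonPrefix p d := by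
  rintro (_ | ⟨e, l⟩) hl ⟨lp, hlp⟩ ⟨ld, hld⟩
  · exact hl rfl
  obtain ⟨t', d', h', htd', ht', hd'⟩ := hL.exists_pair_mem_of_edges_eq_cons htd
    (la := l ++ lp ++ d.edges) (lb := l ++ ld) (by rw [ht, ← hlp]; rfl) hld.symm
  have hd := congrArg List.length hld
  have hne : t' ≠ d' := fun htd' => by
    have := congrArg (·.edges.length) htd'
    simp only [ht', hd', List.length_append, List.length_cons] at this hd
    omega
  have := hmin t' d' h' htd' hne
  simp only [hd', List.length_append, List.length_cons] at this hd
  omega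

variable (h0 : zero ∉ L)
include h0

theorem isSuffixOf_or_isSuffixOf {a b c e : G.DPath} {h₁ : a.first = b.first}
    {h₂ : c.first = e.first} (hab : pair a b h₁ ∈ L) (hce : pair c e h₂ ∈ L) :
    c.IsSuffixOf b ∨ b.IsSuffixOf c := by
  by_contra! hcon
  have hm := hL.2.1 _ hab _ hce
  rw [pair_mul_pair_eq_zero h₁ h₂ hcon.1 hcon.2] at hm
  exact h0 hm

theorem isSuffixOf_of_length_le {q₁ q₂ : G.DPath} (hq₁ : pair q₁ q₁ rfl ∈ L)
    (hq₂ : pair q₂ q₂ rfl ∈ L) (hlen : q₁.edges.length ≤ q₂.edges.length) :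
    q₁.IsSuffixOf q₂ := by
  rcases hL.isSuffixOf_or_isSuffixOf h0 hq₂ hq₁ with hs | hs
  · exact hs
  · exact hs.eq_of_length_le hlen ▸ .refl q₂

theorem length_ne_of_pair_mem {x y : G.DPath} {h : x.first = y.first} (hxy : pair x y h ∈ L)
    (hne : x ≠ y) : x.edges.length ≠ y.edges.length := by
  intro hlen
  rcases hL.isSuffixOf_or_isSuffixOf h0 hxy hxy with hs | hs
  · exact hne (hs.eq_of_length_le hlen.ge)
  · exact hne (hs.eq_of_length_le hlen.le).symm

theorem isChainOfIdem (hid : ∀ z ∈ L, z * z = z) : IsChainOfIdem G L := by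
  have hdiag : ∀ x ∈ L, ∃ q : G.DPath, x = pair q q rfl := by
    rintro (_ | ⟨a, b, h⟩) hx
    · exact absurd hx h0
    · obtain rfl := eq_of_pair_mul_self h (hid _ hx)
      exact ⟨a, rfl⟩
  refine ⟨hid, fun x hx y hy => ?_⟩
  obtain ⟨q₁, rfl⟩ := hdiag x hx
  obtain ⟨q₂, rfl⟩ := hdiag y hy
  rcases hL.isSuffixOf_or_isSuffixOf h0 hx hy with ⟨l, hl, hf⟩ | ⟨l, hl, hf⟩
  · exact Or.inl (le_pair_of_edges_eq_append rfl rfl l hl hl hf)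
  · exact Or.inr (le_pair_of_edges_eq_append rfl rfl l hl hl hf)

theorem add_mem_lengthGaps {j k : ℤ} (hj : j ∈ lengthGaps L) (hk : k ∈ lengthGaps L) :
    j + k ∈ lengthGaps L := by
  obtain ⟨a, b, hab, habL, rfl⟩ := hj
  obtain ⟨c, e, hce, hceL, rfl⟩ := hk
  rcases hL.isSuffixOf_or_isSuffixOf h0 habL hceL with ⟨l, hl, hf⟩ | ⟨l, hl, hf⟩
  · obtain ⟨y, hy, hyL, hye⟩ := hL.exists_pair_mem_append_right habL hceL hl hf
    refine ⟨a, y, hy, hyL, ?_⟩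
    simp only [hye, hl, List.length_append]
    push_cast
    ring
  · obtain ⟨x, hx, hxL, hxe⟩ := hL.exists_pair_mem_append_left habL hceL hl hf
    refine ⟨x, e, hx, hxL, ?_⟩
    simp only [hxe, hl, List.length_append]
    push_cast
    ring

theorem exists_lengthGaps_eq_dvd : ∃ n : ℕ, ∀ k, k ∈ lengthGaps L ↔ (n : ℤ) ∣ k := by
  let H : AddSubgroup ℤ :=
    { carrier := lengthGaps L
      add_mem' := hL.add_mem_lengthGaps h0
      zero_mem' := by
        obtain ⟨_ | ⟨a, b, h⟩, hx⟩ := hL.1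
        · exact absurd hx h0
        · exact ⟨a, a, rfl, hL.pair_left_mem hx, sub_self _⟩
      neg_mem' := by
        rintro _ ⟨a, b, h, habL, rfl⟩
        exact ⟨b, a, h.symm, hL.pair_swap_mem habL, by ring⟩ }
  obtain ⟨a, ha⟩ := Int.subgroup_cyclic H
  refine ⟨a.natAbs, fun k => ?_⟩
  rw [Int.natAbs_dvd, ← Int.mem_zmultiples_iff, AddSubgroup.zmultiples_eq_closure, ← ha]
  rfl

theorem exists_pair_mem_length_ge {t d : G.DPath} {h : t.first = d.first}
    (htd : pair t d h ∈ L) (hdt : d.edges.length < t.edges.length) (N : ℕ) :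
    ∃ (M : G.DPath) (h : M.first = d.first), pair M d h ∈ L ∧
      d.edges.length + N ≤ M.edges.length := by
  induction N with
  | zero => exact ⟨d, rfl, hL.pair_right_mem htd, le_rfl⟩
  | succ N ih =>
    obtain ⟨M, hM, hML, hN⟩ := ih
    obtain ⟨l, hl, hf⟩ := hL.isSuffixOf_of_length_le h0 (hL.pair_right_mem htd)
      (hL.pair_left_mem hML) (by omega)
    obtain ⟨x, hx, hxL, hxe⟩ := hL.exists_pair_mem_append_left htd hML hl hf
    refine ⟨x, hx, hxL, ?_⟩
    have := congrArg List.length hl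
    simp only [hxe, List.length_append] at this ⊢
    omega

theorem exists_pair_mem_length_add {d : G.DPath}
    (hlong : ∀ N, ∃ (M : G.DPath) (h : M.first = d.first), pair M d h ∈ L ∧
      d.edges.length + N ≤ M.edges.length)
    {a b : G.DPath} {h : a.first = b.first} (hab : pair a b h ∈ L)
    (hba : b.edges.length ≤ a.edges.length) :
    ∃ (t : G.DPath) (h : t.first = d.first), pair t d h ∈ L ∧
      t.edges.length + b.edges.length = d.edges.length + a.edges.length := by
  -- `(d, M) ((a, b) (M, d))` for a long enough `M`
  obtain ⟨M, hM, hML, hbM⟩ := hlong b.edges.length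
  obtain ⟨l, hl, hf⟩ :=
    hL.isSuffixOf_of_length_le h0 (hL.pair_right_mem hab) (hL.pair_left_mem hML) (by omega)
  obtain ⟨x, hx, hxL, hxe⟩ := hL.exists_pair_mem_append_left hab hML hl hf
  have hlM := congrArg List.length hl
  have hlx := congrArg List.length hxe
  simp only [List.length_append] at hlM hlx
  obtain ⟨l', hl', hf'⟩ := hL.isSuffixOf_of_length_le h0 (hL.pair_left_mem hML)
    (hL.pair_left_mem hxL) (by omega)
  obtain ⟨t, ht, htL, hte⟩ := hL.exists_pair_mem_append_left (hL.pair_swap_mem hML) hxL hl' hf'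
  refine ⟨t, ht, htL, ?_⟩
  have := congrArg List.length hl'
  simp only [hte, List.length_append] at this ⊢
  omega

theorem exists_isCircuit_pair_mem {d : G.DPath}
    (hlong : ∀ N, ∃ (M : G.DPath) (h : M.first = d.first), pair M d h ∈ L ∧
      d.edges.length + N ≤ M.edges.length)
    {n : ℕ} (hn : (n : ℤ) ∈ lengthGaps L) (hn0 : 0 < n) :
    ∃ p : G.DPath, G.IsCircuit p ∧ d.first = p.first ∧ p.edges.length = n ∧
      ∃ (t : G.DPath) (h : t.first = d.first), pair t d h ∈ L ∧
        t.edges = p.edges ++ d.edges := by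
  obtain ⟨a, b, h, hab, hgap⟩ := hn
  obtain ⟨t, ht, htL, htlen⟩ := hL.exists_pair_mem_length_add h0 hlong hab (by omega)
  obtain ⟨l, hl, hf⟩ := hL.isSuffixOf_of_length_le h0 (hL.pair_right_mem htL)
    (hL.pair_left_mem htL) (by omega)
  have hw := t.wf
  rw [hl, G.isWalk_append, ht] at hw
  have hln : l.length = n := by
    have := congrArg List.length hl
    simp only [List.length_append] at this
    omega
  refine ⟨⟨d.first, l, hw.1⟩, ⟨?_, ?_⟩, rfl, hln, t, ht, htL, hl⟩
  · rintro rfl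
    simp only [List.length_nil] at hln
    omega
  · exact (hf.trans (congrArg (G.walkEnd · l) ht)).symm

end IsCISS

section powEdges

variable {G : DGraph}

@[simp] theorem powEdges_zero (p : G.DPath) : powEdges p 0 = [] := rfl

theorem powEdges_succ (p : G.DPath) (r : ℕ) :
    powEdges p (r + 1) = p.edges ++ powEdges p r := by
  simp [powEdges, List.replicate_succ]

theorem powEdges_add (p : G.DPath) (r s : ℕ) :
    powEdges p (r + s) = powEdges p r ++ powEdges p s := by
  rw [powEdges, List.replicate_add, List.flatten_append, powEdges, powEdges]

theorem powEdges_succ' (p : G.DPath) (r : ℕ) :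
    powEdges p (r + 1) = powEdges p r ++ p.edges := by
  rw [powEdges_add]
  simp [powEdges]

@[simp] theorem length_powEdges (p : G.DPath) (r : ℕ) :
    (powEdges p r).length = r * p.edges.length := by
  induction r with
  | zero => simp
  | succ r ih => rw [powEdges_succ, List.length_append, ih]; ring

variable {p : G.DPath} (hc : G.IsCircuit p)
include hc

theorem walkEnd_powEdges (r : ℕ) : G.walkEnd p.first (powEdges p r) = p.first := by
  induction r with
  | zero => rfl
  | succ r ih => rw [powEdges_succ', DGraph.walkEnd_append, ih]; exact hc.2

theorem isWalk_powEdges_append {d : G.DPath} (hdp : d.first = p.first) (r : ℕ) :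
    G.IsWalk p.first (powEdges p r ++ d.edges) := by
  induction r with
  | zero => simpa [← hdp] using d.wf
  | succ r ih =>
    rw [powEdges_succ, List.append_assoc, G.isWalk_append]
    exact ⟨p.wf, by rw [show G.walkEnd p.first p.edges = p.first from hc.2]; exact ih⟩

end powEdges

namespace IsCISS

open GIS

section cycle

variable {G : DGraph} {L : Set (GIS G)} (hL : IsCISS G L) {p d t : G.DPath}
  (hc : G.IsCircuit p) (hdp : d.first = p.first) {h : t.first = d.first}
  (htd : pair t d h ∈ L) (ht : t.edges = p.edges ++ d.edges)
include hL hc hdp htd ht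

theorem exists_pair_mem_powEdges (r : ℕ) :
    ∃ (a : G.DPath) (h : a.first = d.first), pair a d h ∈ L ∧
      a.edges = powEdges p r ++ d.edges := by
  induction r with
  | zero => exact ⟨d, rfl, hL.pair_right_mem htd, rfl⟩
  | succ r ih =>
    obtain ⟨a, ha, haL, hae⟩ := ih
    obtain ⟨x, hx, hxL, hxe⟩ := hL.exists_pair_mem_append_left htd haL hae
      (by rw [ha, hdp, walkEnd_powEdges hc])
    exact ⟨x, hx, hxL, by rw [hxe, ht, powEdges_succ', List.append_assoc]⟩

theorem cycleSet_subset : cycleSet G p d ⊆ L := by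
  rintro _ (⟨r, s, v, a, b, hab, ⟨lv, hlv, hvf⟩, rfl, haf, hae, hbf, hbe⟩ |
    ⟨q, ⟨lq, hlq, hqf⟩, rfl⟩)
  · obtain ⟨A, hA, hAL, hAe⟩ := hL.exists_pair_mem_powEdges hc hdp htd ht (r + 1)
    obtain ⟨B, hB, hBL, hBe⟩ := hL.exists_pair_mem_powEdges hc hdp htd ht (s + 1)
    have hABL := hL.2.1 _ hAL _ (hL.pair_swap_mem hBL)
    rw [pair_mul_pair_same] at hABL
    refine hL.2.2.2 _ hABL _ (le_pair_of_edges_eq_append _ hab lv ?_ ?_ ?_)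
    · rw [hAe, powEdges_succ, hlv, hae]
      simp only [List.append_assoc]
    · rw [hBe, powEdges_succ, hlv, hbe]
      simp only [List.append_assoc]
    · rw [haf, hvf, hA, hdp]
  · exact hL.2.2.2 _ (hL.pair_right_mem htd) _ (le_pair_of_edges_eq_append rfl rfl lq hlq hlq hqf)

variable (h0 : zero ∉ L)
include h0

theorem exists_isSuffixOf_edges_eq {q : G.DPath} (hq : pair q q rfl ∈ L)
    (hdq : d.edges.length ≤ q.edges.length) :
    ∃ v : G.DPath, v.IsSuffixOf p ∧ v.first = q.first ∧
      v.edges = p.edges.drop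
        (p.edges.length - (q.edges.length - d.edges.length) % p.edges.length) ∧
      q.edges = v.edges ++ powEdges p ((q.edges.length - d.edges.length) / p.edges.length) ++
        d.edges := by
  set n := p.edges.length with hn
  set j := (q.edges.length - d.edges.length) % n
  set s := (q.edges.length - d.edges.length) / n
  have hjn : j < n := Nat.mod_lt _ (List.length_pos_iff.mpr hc.1)
  have hqlen : q.edges.length = d.edges.length + (s * n + j) := by
    have : s * n + j = q.edges.length - d.edges.length := Nat.div_add_mod' _ _
    omega
  obtain ⟨a, ha, haL, hae⟩ := hL.exists_pair_mem_powEdges hc hdp htd ht (s + 1)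
  have hsplit : a.edges =
      p.edges.take (n - j) ++ (p.edges.drop (n - j) ++ powEdges p s ++ d.edges) := by
    rw [hae, powEdges_succ]
    conv_lhs => rw [← List.take_append_drop (n - j) p.edges]
    simp only [List.append_assoc]
  have hqa := hL.isSuffixOf_of_length_le h0 hq (hL.pair_left_mem haL) (by
    simp only [hae, List.length_append, length_powEdges, add_one_mul, ← hn]
    omega)
  obtain ⟨hqe, hqf⟩ := hqa.eq_of_edges_eq_append hsplit (by
    simp only [List.length_append, List.length_drop, length_powEdges, ← hn]
    omega)
  have hw := q.wf
  rw [hqe, List.append_assoc, G.isWalk_append] at hw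
  refine ⟨⟨q.first, p.edges.drop (n - j), hw.1⟩,
    ⟨p.edges.take (n - j), (List.take_append_drop _ _).symm, ?_⟩, rfl, rfl, hqe⟩
  show q.first = G.walkEnd p.first _
  rw [hqf, ha, hdp]

theorem pair_mem_cycleSet {x y : G.DPath} {hxy : x.first = y.first} (hxyL : pair x y hxy ∈ L)
    (hx : d.edges.length ≤ x.edges.length) (hy : d.edges.length ≤ y.edges.length)
    (hgap : (p.edges.length : ℤ) ∣ (x.edges.length : ℤ) - y.edges.length) :
    pair x y hxy ∈ cycleSet G p d := by
  obtain ⟨v, hv, hvf, hve, hxe⟩ :=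
    hL.exists_isSuffixOf_edges_eq hc hdp htd ht h0 (hL.pair_left_mem hxyL) hx
  obtain ⟨w, -, hwf, hwe, hye⟩ :=
    hL.exists_isSuffixOf_edges_eq hc hdp htd ht h0 (hL.pair_right_mem hxyL) hy
  have hmod : y.edges.length - d.edges.length ≡ x.edges.length - d.edges.length
      [MOD p.edges.length] :=
    Nat.modEq_iff_dvd.2 (by rwa [Nat.cast_sub hx, Nat.cast_sub hy, sub_sub_sub_cancel_right])
  have hwv : w = v := DGraph.DPath.ext (by rw [hwf, hvf, hxy]) (by rw [hwe, hve, hmod])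
  rw [hwv] at hwf hye
  exact Or.inl ⟨_, _, v, x, y, hxy, hv, rfl, hvf.symm, hxe, hwf.symm, hye⟩

theorem subset_cycleSet
    (hmin : ∀ (a b : G.DPath) (h : a.first = b.first), pair a b h ∈ L → a ≠ b →
      d.edges.length ≤ b.edges.length)
    (hgap : ∀ k ∈ lengthGaps L, (p.edges.length : ℤ) ∣ k) :
    L ⊆ cycleSet G p d := by
  rintro (_ | ⟨x, y, hxy⟩) hz
  · exact absurd hz h0
  by_cases hlen : d.edges.length ≤ x.edges.length ∧ d.edges.length ≤ y.edges.length
  · exact hL.pair_mem_cycleSet hc hdp htd ht h0 hz hlen.1 hlen.2 (hgap _ ⟨x, y, hxy, hz, rfl⟩)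
  obtain rfl : x = y := by
    by_contra hne
    exact hlen ⟨hmin y x hxy.symm (hL.pair_swap_mem hz) (Ne.symm hne), hmin x y hxy hz hne⟩
  exact Or.inr ⟨x, hL.isSuffixOf_of_length_le h0 (hL.pair_left_mem hz)
    (hL.pair_right_mem htd) (by omega), rfl⟩

end cycle

variable {G : DGraph} {L : Set (GIS G)}

theorem exists_eq_cycleSet (hL : IsCISS G L) (h0 : GIS.zero ∉ L)
    (hne : ∃ z ∈ L, z * z ≠ z) :
    ∃ p d : G.DPath, G.IsCircuit p ∧ d.first = p.first ∧ G.NoCommonPrefix p d ∧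
      L = cycleSet G p d := by
  obtain ⟨x, d, h, hxd, hxne, hmin⟩ := exists_shortest_nonidempotent hne
  have hdx : d.edges.length < x.edges.length :=
    (hmin d x h.symm (hL.pair_swap_mem hxd) hxne.symm).lt_of_ne
      (hL.length_ne_of_pair_mem h0 hxd hxne).symm
  obtain ⟨n, hgaps⟩ := hL.exists_lengthGaps_eq_dvd h0
  have hn : 0 < n := by
    refine Nat.pos_of_ne_zero fun hn0 => ?_
    have := (hgaps _).1 ⟨x, d, h, hxd, rfl⟩
    rw [hn0, Nat.cast_zero, zero_dvd_iff] at this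
    omega
  obtain ⟨p, hc, hdp, hpn, t, ht, htd, hte⟩ := hL.exists_isCircuit_pair_mem h0
    (hL.exists_pair_mem_length_ge h0 hxd hdx) ((hgaps n).2 dvd_rfl) hn
  refine ⟨p, d, hc, hdp, hL.noCommonPrefix_of_shortest htd hte hmin, ?_⟩
  exact (hL.subset_cycleSet hc hdp htd hte h0 hmin fun k hk => hpn ▸ (hgaps k).1 hk).antisymm
    (hL.cycleSet_subset hc hdp htd hte)

end IsCISS

section cycleSet

variable {G : DGraph} {p d : G.DPath} (hc : G.IsCircuit p) (hdp : d.first = p.first)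

def powEdgesAppendPath (r : ℕ) : G.DPath :=
  ⟨p.first, powEdges p r ++ d.edges, isWalk_powEdges_append hc hdp r⟩

include hc hdp

theorem pair_powEdgesAppendPath_mem_cycleSet (r : ℕ) :
    GIS.pair (powEdgesAppendPath hc hdp r) d hdp.symm ∈ cycleSet G p d :=
  Or.inl ⟨r, 0, ⟨p.first, [], trivial⟩, _, _, _, ⟨p.edges, by simp, hc.2.symm⟩, rfl, rfl,
    by simp [powEdgesAppendPath], hdp, by simp⟩

theorem cycleSet_infinite : (cycleSet G p d).Infinite := by
  refine Set.infinite_of_injective_forall_mem (fun r s hrs => ?_)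
    (pair_powEdgesAppendPath_mem_cycleSet hc hdp)
  injection hrs with hrs
  have := congrArg (·.edges.length) hrs
  simp only [powEdgesAppendPath, List.length_append, length_powEdges] at this
  exact Nat.eq_of_mul_eq_mul_right (List.length_pos_iff.mpr hc.1) (by omega)

theorem exists_mul_self_ne_mem_cycleSet : ∃ x ∈ cycleSet G p d, x * x ≠ x := by
  refine ⟨_, pair_powEdgesAppendPath_mem_cycleSet hc hdp 1, fun hid => ?_⟩
  have := congrArg (·.edges.length) (GIS.eq_of_pair_mul_self _ hid)
  simp only [powEdgesAppendPath, List.length_append, length_powEdges] at this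
  exact hc.1 (List.length_eq_zero_iff.mp (by omega))

end cycleSet

theorem stmt_6_general (G : DGraph) (L : Set (GIS G))
    (hL : IsCISS G L) (hproper : L ≠ Set.univ) :
    ((IsChainOfIdem G L ∧ L.Finite) ∨ (IsChainOfIdem G L ∧ L.Infinite) ∨
      (∃ p d : G.DPath, G.IsCircuit p ∧ d.first = p.first ∧ G.NoCommonPrefix p d ∧
        L = cycleSet G p d)) ∧
    ¬((IsChainOfIdem G L ∧ L.Finite) ∧ (IsChainOfIdem G L ∧ L.Infinite)) ∧
    ¬((IsChainOfIdem G L ∧ L.Finite) ∧ (∃ p d : G.DPath, G.IsCircuit p ∧ d.first = p.first ∧ G.NoCommonPrefix p d ∧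
        L = cycleSet G p d)) ∧
    ¬((IsChainOfIdem G L ∧ L.Infinite) ∧ (∃ p d : G.DPath, G.IsCircuit p ∧ d.first = p.first ∧ G.NoCommonPrefix p d ∧
        L = cycleSet G p d)) := by
  have h0 : GIS.zero ∉ L := fun hz => hproper (hL.eq_univ_of_zero_mem hz)
  refine ⟨?_, fun ⟨⟨_, hf⟩, _, hi⟩ => hi hf, ?_, ?_⟩
  · by_cases hne : ∃ z ∈ L, z * z ≠ z
    · exact Or.inr (Or.inr (hL.exists_eq_cycleSet h0 hne))
    · have hchain := hL.isChainOfIdem h0 (by simpa using hne)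
      rcases L.finite_or_infinite with hf | hi
      · exact Or.inl ⟨hchain, hf⟩
      · exact Or.inr (Or.inl ⟨hchain, hi⟩)
  · rintro ⟨⟨-, hf⟩, p, d, hc, hdp, -, rfl⟩
    exact cycleSet_infinite hc hdp hf
  · rintro ⟨⟨⟨hid, -⟩, -⟩, p, d, hc, hdp, -, rfl⟩
    obtain ⟨x, hx, hxx⟩ := exists_mul_self_ne_mem_cycleSet hc hdp
    exact hxx (hid x hx)

/-- every proper closed inverse subsemigroup of `S(Γ)` is of exactly
one of three types: a finite chain of idempotents, an infinite chain of idempotents,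
or of cycle type `L_{p,d}`. -/
theorem stmt_6 (G : DGraph) [Fintype G.V] [Fintype G.E] (L : Set (GIS G))
    (hL : IsCISS G L) (hproper : L ≠ Set.univ) :
    ((IsChainOfIdem G L ∧ L.Finite) ∨ (IsChainOfIdem G L ∧ L.Infinite) ∨
      (∃ p d : G.DPath, G.IsCircuit p ∧ d.first = p.first ∧ G.NoCommonPrefix p d ∧
        L = cycleSet G p d)) ∧
    ¬((IsChainOfIdem G L ∧ L.Finite) ∧ (IsChainOfIdem G L ∧ L.Infinite)) ∧
    ¬((IsChainOfIdem G L ∧ L.Finite) ∧ (∃ p d : G.DPath, G.IsCircuit p ∧ d.first = p.first ∧ G.NoCommonPrefix p d ∧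
        L = cycleSet G p d)) ∧
    ¬((IsChainOfIdem G L ∧ L.Infinite) ∧ (∃ p d : G.DPath, G.IsCircuit p ∧ d.first = p.first ∧ G.NoCommonPrefix p d ∧
        L = cycleSet G p d)) :=
  stmt_6_general G L hL hproper
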